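/- arXiv:1112.5456 — 2 statements merged into one kernel-verified Lean document; each statement's English description precedes it below -/
import Mathlib

section
/- (Value of the averaged qubit-pair game) Consider the weighted quantum retrieval game G_avg = (ϱ, σ_avg) on ℂ⁴ with the eight-state qubit-pair ensemble, answer set A = {0,1}²×{0,1}², and utility σ_avg(s, (a_X, a_Z)) = (σ_X(s, a_X) + σ_Z(s, a_Z))/2. Then Sel(G_avg) = 1/2 + 1/√8 (equivalently 1/2 + √2/4), the optimal fidelity for covariant qubit cloning. -/
open Matrix
open scoped ComplexOrder
open scoped ComplexOrder

namespace QRG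

variable {n S A : Type*}

/-- The normalization `∑_{s,a} Tr[P(a)ϱ(s)]` of the distribution induced by an
indexed ensemble `ϱ` and a selective projection `P`. -/
noncomputable def normZ [Fintype n] [Fintype S] [Fintype A]
    (ϱ : S → Matrix n n ℂ) (P : A → Matrix n n ℂ) : ℝ :=
  ∑ s, ∑ a, (Matrix.trace (P a * ϱ s)).re

/-- The induced probability distribution `⟨ϱ, P⟩(s,a) = Tr[P(a)ϱ(s)] / normZ`. -/
noncomputable def induced [Fintype n] [Fintype S] [Fintype A]
    (ϱ : S → Matrix n n ℂ) (P : A → Matrix n n ℂ) (s : S) (a : A) : ℝ :=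
  (Matrix.trace (P a * ϱ s)).re / normZ ϱ P

/-- The value `Val(G,P) = ∑_{s,a} p(s,a)·σ(s,a)` of the game `G = (ϱ,σ)` with
respect to the projection `P`. -/
noncomputable def val [Fintype n] [Fintype S] [Fintype A]
    (ϱ : S → Matrix n n ℂ) (σ : S → A → ℝ) (P : A → Matrix n n ℂ) : ℝ :=
  ∑ s, ∑ a, induced ϱ P s a * σ s a

/-- The selective value `Sel(G)`: the supremum of `Val(G,P)` over all selective
projections `P` (families of positive semidefinite matrices) with positive
normalization. -/
noncomputable def sel [Fintype n] [Fintype S] [Fintype A]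
    (ϱ : S → Matrix n n ℂ) (σ : S → A → ℝ) : ℝ :=
  sSup {v | ∃ P : A → Matrix n n ℂ,
    (∀ a, (P a).PosSemidef) ∧ 0 < normZ ϱ P ∧ v = val ϱ σ P}

/-- The physical value `Phys(G)`: the supremum of `Val(G,P)` over all physical
projections `P` (selective projections with `∑_a P(a) = 1`). -/
noncomputable def phys [Fintype n] [DecidableEq n] [Fintype S] [Fintype A]
    (ϱ : S → Matrix n n ℂ) (σ : S → A → ℝ) : ℝ :=
  sSup {v | ∃ P : A → Matrix n n ℂ,
    (∀ a, (P a).PosSemidef) ∧ (∑ a, P a) = 1 ∧ v = val ϱ σ P}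

end QRG

open QRG

/-- The `Z`-eigenstates `|0⟩` (for `false`) and `|1⟩` (for `true`) of a qubit. -/
noncomputable def zket (b : Bool) : Fin 2 → ℂ :=
  fun i => if i = (if b then 1 else 0) then 1 else 0

/-- The `X`-eigenstates `|+⟩` (for `false`) and `|−⟩` (for `true`) of a qubit. -/
noncomputable def xket (b : Bool) : Fin 2 → ℂ :=
  fun i => (if b = true ∧ i = 1 then (-1 : ℂ) else 1) * ((Real.sqrt 2 : ℂ))⁻¹

/-- The eight qubit-pair states: `s = (w, zb, xb)` encodes the state `|z,x⟩` (when
`w = false`) or `|x,z⟩` (when `w = true`), where `z` is the `Z`-eigenstate labelled by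
`zb` and `x` is the `X`-eigenstate labelled by `xb`. -/
noncomputable def pairKet (s : Bool × Bool × Bool) : Fin 2 × Fin 2 → ℂ :=
  fun p => if s.1 then xket s.2.2 p.1 * zket s.2.1 p.2
           else zket s.2.1 p.1 * xket s.2.2 p.2

/-- The eight-state qubit-pair indexed ensemble `ϱ(s) = (1/8)|s⟩⟨s|` on `ℂ⁴`. -/
noncomputable def pairEns (s : Bool × Bool × Bool) :
    Matrix (Fin 2 × Fin 2) (Fin 2 × Fin 2) ℂ :=
  ((1 : ℂ)/8) • Matrix.vecMulVec (pairKet s) (star (pairKet s))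

/-- The `Z`-axis utility: the answer bit at the position where the state carries a
`Z`-eigenstate must agree with that eigenstate. -/
noncomputable def sigmaZ (s : Bool × Bool × Bool) (a : Bool × Bool) : ℝ :=
  if (if s.1 then a.2 else a.1) = s.2.1 then 1 else 0

/-- The `X`-axis utility: the answer bit at the position where the state carries an
`X`-eigenstate must agree with that eigenstate. -/
noncomputable def sigmaX (s : Bool × Bool × Bool) (a : Bool × Bool) : ℝ :=
  if (if s.1 then a.1 else a.2) = s.2.2 then 1 else 0

/-!
Write `c = 1/2 + √2/4`. For an answer `a = ((x₁, x₂), (z₁, z₂))` the operator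
`W_a = ∑ₛ (c - σ_avg(s, a)) ϱ(s)` satisfies `(c - Val(G, P)) · normZ = ∑ₐ Tr[P(a) W_a]`, so
`Sel(G) = c` as soon as every `W_a` is positive semidefinite and some selective projection
makes all the traces vanish. Summing the ensemble over the bit that is not tested turns the
qubit projections into identities, giving `W_a = (A(z₁, x₁) ⊗ 1 + 1 ⊗ A(z₂, x₂)) / 8` with
`A(z, x) = c - (Π_z + Π_x) / 2` for the projections `Π_z`, `Π_x` onto a `Z`- and an
`X`-eigenstate. As `Π_z + Π_x` has eigenvalues `1 ± 1/√2`, each `A(z, x)` is a nonnegative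
multiple of a rank-one projection. Its kernel is spanned by the top eigenvector `w` of
`Π_0 + Π_+`, so `P = |w ⊗ w⟩⟨w ⊗ w|` on the answer `((0, 0), (0, 0))` attains `c`.
-/

open scoped Kronecker

open scoped MatrixOrder in
theorem Matrix.PosSemidef.re_trace_mul_nonneg {𝕜 n : Type*} [RCLike 𝕜] [Fintype n]
    {P Q : Matrix n n 𝕜} (hP : P.PosSemidef) (hQ : Q.PosSemidef) :
    0 ≤ RCLike.re (P * Q).trace := by
  classical
  obtain ⟨B, rfl⟩ := CStarAlgebra.nonneg_iff_eq_star_mul_self.mp hQ.nonneg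
  rw [Matrix.star_eq_conjTranspose, ← Matrix.mul_assoc, Matrix.trace_mul_comm, ← Matrix.mul_assoc]
  exact (RCLike.nonneg_iff.mp (hP.mul_mul_conjTranspose_same B).trace_nonneg).1

theorem Matrix.sub_kronecker {l m n p α : Type*} [NonUnitalNonAssocRing α]
    (A₁ A₂ : Matrix l m α) (B : Matrix n p α) : (A₁ - A₂) ⊗ₖ B = A₁ ⊗ₖ B - A₂ ⊗ₖ B := by
  ext; simp [sub_mul]

theorem Matrix.kronecker_sub {l m n p α : Type*} [NonUnitalNonAssocRing α]
    (A : Matrix l m α) (B₁ B₂ : Matrix n p α) : A ⊗ₖ (B₁ - B₂) = A ⊗ₖ B₁ - A ⊗ₖ B₂ := by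
  ext; simp [mul_sub]

theorem Matrix.vecMulVec_kronecker_vecMulVec {m n α : Type*} [CommSemiring α]
    (u v : m → α) (u' v' : n → α) :
    vecMulVec u v ⊗ₖ vecMulVec u' v' =
      vecMulVec (fun p => u p.1 * u' p.2) (fun p => v p.1 * v' p.2) := by
  ext ⟨i, i'⟩ ⟨j, j'⟩
  simp only [kronecker_apply, vecMulVec_apply]
  ring

namespace QRG

variable {n S A : Type*} [Fintype n] [Fintype S] [Fintype A]

noncomputable def gapOp (c : ℝ) (ϱ : S → Matrix n n ℂ) (σ : S → A → ℝ) (a : A) :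
    Matrix n n ℂ :=
  ∑ s, ((c - σ s a : ℝ) : ℂ) • ϱ s

theorem normZ_eq_re_trace (ϱ : S → Matrix n n ℂ) (P : A → Matrix n n ℂ) :
    normZ ϱ P = ((∑ a, P a) * ∑ s, ϱ s).trace.re := by
  simp only [normZ, Matrix.sum_mul, Matrix.mul_sum, Matrix.trace_sum, Complex.re_sum]

theorem sub_val_mul_normZ (c : ℝ) (ϱ : S → Matrix n n ℂ) (σ : S → A → ℝ)
    {P : A → Matrix n n ℂ} (hZ : normZ ϱ P ≠ 0) :
    (c - val ϱ σ P) * normZ ϱ P = ∑ a, (P a * gapOp c ϱ σ a).trace.re := by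
  have hval : val ϱ σ P * normZ ϱ P = ∑ s, ∑ a, σ s a * (P a * ϱ s).trace.re := by
    simp only [val, induced, Finset.sum_mul]
    refine Finset.sum_congr rfl fun s _ => Finset.sum_congr rfl fun a _ => ?_
    field_simp
  calc (c - val ϱ σ P) * normZ ϱ P
      = ∑ s, ∑ a, (c - σ s a) * (P a * ϱ s).trace.re := by
        rw [sub_mul, hval, normZ]
        simp only [Finset.mul_sum, sub_mul, ← Finset.sum_sub_distrib]
    _ = ∑ a, (P a * gapOp c ϱ σ a).trace.re := by
        simp only [gapOp, Matrix.mul_sum, Matrix.mul_smul, Matrix.trace_sum, Matrix.trace_smul,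
          smul_eq_mul, Complex.re_sum, Complex.re_ofReal_mul]
        exact Finset.sum_comm

variable {c : ℝ} {ϱ : S → Matrix n n ℂ} {σ : S → A → ℝ}

theorem val_le_of_gapOp_posSemidef (hgap : ∀ a, (gapOp c ϱ σ a).PosSemidef)
    {P : A → Matrix n n ℂ} (hP : ∀ a, (P a).PosSemidef) (hZ : 0 < normZ ϱ P) :
    val ϱ σ P ≤ c := by
  have h : 0 ≤ (c - val ϱ σ P) * normZ ϱ P := by
    rw [sub_val_mul_normZ c ϱ σ hZ.ne']
    exact Finset.sum_nonneg fun a _ => (hP a).re_trace_mul_nonneg (hgap a)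
  linarith [(mul_nonneg_iff_of_pos_right hZ).mp h]

theorem sel_eq_of_gapOp_posSemidef (hgap : ∀ a, (gapOp c ϱ σ a).PosSemidef)
    {P : A → Matrix n n ℂ} (hP : ∀ a, (P a).PosSemidef) (hZ : 0 < normZ ϱ P)
    (hopt : ∑ a, (P a * gapOp c ϱ σ a).trace.re = 0) : sel ϱ σ = c := by
  refine IsGreatest.csSup_eq ⟨⟨P, hP, hZ, ?_⟩, ?_⟩
  · have h := sub_val_mul_normZ c ϱ σ hZ.ne'
    rwa [hopt, mul_eq_zero_iff_right hZ.ne', sub_eq_zero] at h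
  · rintro v ⟨Q, hQ, hQZ, rfl⟩
    exact val_le_of_gapOp_posSemidef hgap hQ hQZ

end QRG

open Matrix

noncomputable def zproj (b : Bool) : Matrix (Fin 2) (Fin 2) ℂ :=
  vecMulVec (zket b) (star (zket b))

noncomputable def xproj (b : Bool) : Matrix (Fin 2) (Fin 2) ℂ :=
  vecMulVec (xket b) (star (xket b))

theorem zproj_false_add_zproj_true : zproj false + zproj true = 1 := by
  ext i j
  fin_cases i <;> fin_cases j <;> simp [zproj, zket, vecMulVec_apply]

theorem xproj_false_add_xproj_true : xproj false + xproj true = 1 := by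
  ext i j
  fin_cases i <;> fin_cases j <;>
    simp [xproj, xket, vecMulVec_apply, Complex.ext_iff] <;> ring_nf <;> norm_num

theorem pairEns_false (z x : Bool) :
    pairEns (false, z, x) = (1 / 8 : ℂ) • (zproj z ⊗ₖ xproj x) := by
  simp only [pairEns, zproj, xproj, vecMulVec_kronecker_vecMulVec]
  congr 2
  ext p
  simp [pairKet]

theorem pairEns_true (z x : Bool) :
    pairEns (true, z, x) = (1 / 8 : ℂ) • (xproj x ⊗ₖ zproj z) := by
  simp only [pairEns, zproj, xproj, vecMulVec_kronecker_vecMulVec]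
  congr 2
  ext p
  simp [pairKet]

theorem sum_pairEns : ∑ s, pairEns s = (1 / 4 : ℂ) • 1 := by
  calc ∑ s, pairEns s
      = (1 / 8 : ℂ) • ((zproj false + zproj true) ⊗ₖ (xproj false + xproj true) +
          (xproj false + xproj true) ⊗ₖ (zproj false + zproj true)) := by
        simp only [Fintype.sum_prod_type, Fintype.sum_bool, pairEns_false, pairEns_true,
          add_kronecker, kronecker_add]
        module
    _ = (1 / 4 : ℂ) • 1 := by
        rw [zproj_false_add_zproj_true, xproj_false_add_xproj_true, one_kronecker_one]
        module

theorem sum_sigmaZ_smul_pairEns (z₁ z₂ : Bool) :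
    ∑ s, (sigmaZ s (z₁, z₂) : ℂ) • pairEns s =
      (1 / 8 : ℂ) • (zproj z₁ ⊗ₖ 1 + 1 ⊗ₖ zproj z₂) := by
  rw [← xproj_false_add_xproj_true]
  simp only [Fintype.sum_prod_type, Fintype.sum_bool, pairEns_false, pairEns_true,
    add_kronecker, kronecker_add]
  cases z₁ <;> cases z₂ <;> simp only [sigmaZ] <;> norm_num <;> module

theorem sum_sigmaX_smul_pairEns (x₁ x₂ : Bool) :
    ∑ s, (sigmaX s (x₁, x₂) : ℂ) • pairEns s =
      (1 / 8 : ℂ) • (xproj x₁ ⊗ₖ 1 + 1 ⊗ₖ xproj x₂) := by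
  rw [← zproj_false_add_zproj_true]
  simp only [Fintype.sum_prod_type, Fintype.sum_bool, pairEns_false, pairEns_true,
    add_kronecker, kronecker_add]
  cases x₁ <;> cases x₂ <;> simp only [sigmaX] <;> norm_num <;> module

noncomputable def avgUtility (s : Bool × Bool × Bool) (a : (Bool × Bool) × (Bool × Bool)) : ℝ :=
  (sigmaX s a.1 + sigmaZ s a.2) / 2

noncomputable def qubitGap (c : ℝ) (z x : Bool) : Matrix (Fin 2) (Fin 2) ℂ :=
  (c : ℂ) • 1 - (1 / 2 : ℂ) • (zproj z + xproj x)

theorem gapOp_pairEns_avgUtility (c : ℝ) (x₁ x₂ z₁ z₂ : Bool) :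
    gapOp c pairEns avgUtility ((x₁, x₂), (z₁, z₂)) =
      (1 / 8 : ℂ) • (qubitGap c z₁ x₁ ⊗ₖ 1 + 1 ⊗ₖ qubitGap c z₂ x₂) := by
  have h : gapOp c pairEns avgUtility ((x₁, x₂), (z₁, z₂)) =
      (c : ℂ) • ∑ s, pairEns s - (1 / 2 : ℂ) • (∑ s, (sigmaX s (x₁, x₂) : ℂ) • pairEns s +
        ∑ s, (sigmaZ s (z₁, z₂) : ℂ) • pairEns s) := by
    simp only [gapOp, avgUtility, Finset.smul_sum, ← Finset.sum_add_distrib,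
      ← Finset.sum_sub_distrib]
    refine Finset.sum_congr rfl fun s _ => ?_
    push_cast
    module
  rw [h, sum_pairEns, sum_sigmaX_smul_pairEns, sum_sigmaZ_smul_pairEns, qubitGap, qubitGap]
  simp only [sub_kronecker, kronecker_sub, smul_kronecker, kronecker_smul, add_kronecker,
    kronecker_add, one_kronecker_one]
  module

theorem qubitGap_posSemidef (z x : Bool) : (qubitGap (1 / 2 + √2 / 4) z x).PosSemidef := by
  -- `u` spans the eigenspace of `zproj z + xproj x` for its smaller eigenvalue `1 - 1/√2`
  obtain ⟨t, ht, u, hu⟩ : ∃ t : ℝ, 0 ≤ t ∧ ∃ u : Fin 2 → ℂ,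
      qubitGap (1 / 2 + √2 / 4) z x = (t : ℂ) • vecMulVec u (star u) := by
    refine ⟨(√2 - if z then -1 else 1) / 4, ?_,
      ![if x then -1 else 1, -(√2 + if z then -1 else 1)], ?_⟩
    · cases z <;> norm_num <;> linarith [Real.one_lt_sqrt_two]
    · ext i j
      simp only [qubitGap, zproj, xproj, vecMulVec_apply, Matrix.sub_apply, Matrix.smul_apply,
        Matrix.add_apply]
      cases z <;> cases x <;> fin_cases i <;> fin_cases j <;>
        simp [zket, xket, Complex.ext_iff] <;> grind [Real.sq_sqrt]
  rw [hu]
  exact (posSemidef_vecMulVec_self_star u).smul (by exact_mod_cast ht)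

theorem gapOp_pairEns_avgUtility_posSemidef (a : (Bool × Bool) × (Bool × Bool)) :
    (gapOp (1 / 2 + √2 / 4) pairEns avgUtility a).PosSemidef := by
  obtain ⟨⟨x₁, x₂⟩, ⟨z₁, z₂⟩⟩ := a
  rw [gapOp_pairEns_avgUtility]
  exact (((qubitGap_posSemidef z₁ x₁).kronecker .one).add
    (PosSemidef.one.kronecker (qubitGap_posSemidef z₂ x₂))).smul (by norm_num [Complex.nonneg_iff])

-- the eigenvector of `zproj false + xproj false` for its top eigenvalue `1 + 1/√2`
noncomputable def topKet : Fin 2 → ℂ := ![1, (√2 : ℂ) - 1]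

noncomputable def topProj : Matrix (Fin 2) (Fin 2) ℂ := vecMulVec topKet (star topKet)

theorem topProj_mul_qubitGap : topProj * qubitGap (1 / 2 + √2 / 4) false false = 0 := by
  ext i j
  simp only [topProj, qubitGap, zproj, xproj, mul_apply, Fin.sum_univ_two, vecMulVec_apply,
    Matrix.sub_apply, Matrix.smul_apply, Matrix.add_apply, Matrix.zero_apply, one_apply]
  fin_cases i <;> fin_cases j <;>
    simp [topKet, zket, xket, Complex.ext_iff] <;> grind [Real.sq_sqrt]

theorem trace_topProj : topProj.trace = ((4 - 2 * √2 : ℝ) : ℂ) := by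
  simp only [topProj, trace, diag, Fin.sum_univ_two, vecMulVec_apply]
  simp [topKet, Complex.ext_iff]
  grind [Real.sq_sqrt]

noncomputable def optimalProjection :
    (Bool × Bool) × (Bool × Bool) → Matrix (Fin 2 × Fin 2) (Fin 2 × Fin 2) ℂ :=
  Pi.single ((false, false), (false, false)) (topProj ⊗ₖ topProj)

theorem optimalProjection_posSemidef (a : (Bool × Bool) × (Bool × Bool)) :
    (optimalProjection a).PosSemidef := by
  rw [optimalProjection, Pi.single_apply]
  split_ifs
  · exact (posSemidef_vecMulVec_self_star _).kronecker (posSemidef_vecMulVec_self_star _)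
  · exact .zero

theorem normZ_optimalProjection_pos : 0 < normZ pairEns optimalProjection := by
  rw [normZ_eq_re_trace, optimalProjection, Fintype.sum_pi_single', sum_pairEns,
    Matrix.mul_smul, mul_one, trace_smul, trace_kronecker, trace_topProj]
  have h : 0 < 4 - 2 * √2 := by
    nlinarith [Real.sq_sqrt (show (0 : ℝ) ≤ 2 by norm_num), Real.sqrt_nonneg 2]
  rw [smul_eq_mul, ← Complex.ofReal_mul, Complex.re_mul_ofReal]
  exact mul_pos (by norm_num) (mul_pos h h)

theorem sum_re_trace_optimalProjection_mul_gapOp :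
    ∑ a, (optimalProjection a * gapOp (1 / 2 + √2 / 4) pairEns avgUtility a).trace.re = 0 := by
  rw [Fintype.sum_eq_single ((false, false), (false, false))]
  · rw [optimalProjection, Pi.single_eq_same, gapOp_pairEns_avgUtility, Matrix.mul_smul, mul_add,
      ← mul_kronecker_mul, ← mul_kronecker_mul, topProj_mul_qubitGap]
    simp
  · intro a ha
    simp [optimalProjection, ha]

/-- Value of the averaged qubit-pair game `G_avg`, with utility
`σ_avg(s,(a_X,a_Z)) = (σ_X(s,a_X) + σ_Z(s,a_Z))/2`: the selective value is
`1/2 + 1/√8 = 1/2 + √2/4`, the optimal fidelity for covariant qubit cloning. -/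
theorem averaged_game_value :
    sel pairEns
      (fun s (a : (Bool × Bool) × (Bool × Bool)) =>
        (sigmaX s a.1 + sigmaZ s a.2) / 2) =
      1/2 + Real.sqrt 2 / 4 :=
  sel_eq_of_gapOp_posSemidef gapOp_pairEns_avgUtility_posSemidef optimalProjection_posSemidef
    normZ_optimalProjection_pos sum_re_trace_optimalProjection_mul_gapOp
end

section
/- (Impossibility of quantum multiplexing of two classical bits) Let d ≥ 1 and for each α, β ∈ {0,1} let ρ_{α,β} be a d×d density matrix (positive semidefinite with trace 1). Let {P^a_0, P^a_1} and {P^b_0, P^b_1} be projective measurements on ℂ^d, i.e., orthogonal projections with P^a_0 + P^a_1 = 1 and P^b_0 + P^b_1 = 1. Suppose ε ∈ [0,1] is such that Tr[P^a_α · ρ_{α,β}] ≥ 1−ε and Tr[P^b_β · ρ_{α,β}] ≥ 1−ε for all α, β ∈ {0,1}. Then for all α, β ∈ {0,1}, the sequential measurement succeeds at recovering both bits with probability Tr[P^a_α · P^b_β · P^a_α · ρ_{α,β}] ≥ 1 − 2ε − 2√ε. -/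
open Matrix
open scoped ComplexOrder

/-!
A state `ρ` makes the matrices a semi-inner product space, `⟪X, Y⟫ = Tr[Y ρ Xᴴ]`, in which
`Tr[P ρ] = ⟪1, P 1⟫`, `‖1‖ = 1`, and left multiplication by an orthogonal projection is an
orthogonal projection. With `Q = P^a_α`, `R = P^b_β` and `w = 1 - Q 1`, expanding
`⟪Q 1, R (Q 1)⟫ = ⟪1 - w, R (1 - w)⟫` leaves `Tr[R ρ]` minus two cross terms, each bounded by
Cauchy–Schwarz by `‖w‖ = √(1 - Tr[Q ρ]) ≤ √ε`; this even gives `1 - ε - 2√ε`.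
-/

open RCLike
open scoped InnerProductSpace

namespace LinearMap.IsSymmetricProjection

variable {𝕜 E : Type*} [RCLike 𝕜] [SeminormedAddCommGroup E] [InnerProductSpace 𝕜 E]
  {T : E →ₗ[𝕜] E}

theorem one_sub (hT : T.IsSymmetricProjection) : (1 - T).IsSymmetricProjection :=
  ⟨hT.isIdempotentElem.one_sub, IsSymmetric.one.sub hT.isSymmetric⟩

theorem re_inner_map_self (hT : T.IsSymmetricProjection) (x : E) :
    re ⟪x, T x⟫_𝕜 = ‖T x‖ ^ 2 := by
  rw [← inner_self_eq_norm_sq (𝕜 := 𝕜), hT.isSymmetric x (T x), ← Module.End.mul_apply,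
    hT.isIdempotentElem.eq]

theorem norm_map_le (hT : T.IsSymmetricProjection) (x : E) : ‖T x‖ ≤ ‖x‖ := by
  have h := hT.re_inner_map_self x ▸ re_inner_le_norm x (T x)
  nlinarith [norm_nonneg (T x), norm_nonneg x]

theorem norm_sub_map_sq (hT : T.IsSymmetricProjection) (x : E) :
    ‖x - T x‖ ^ 2 = ‖x‖ ^ 2 - re ⟪x, T x⟫_𝕜 := by
  rw [← inner_self_eq_norm_sq (𝕜 := 𝕜) x, ← map_sub, ← inner_sub_right]
  simpa using (hT.one_sub.re_inner_map_self x).symm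

theorem re_inner_map_sub_le {S : E →ₗ[𝕜] E} (hT : T.IsSymmetricProjection)
    (hS : S.IsSymmetricProjection) (v : E) :
    re ⟪v, S v⟫_𝕜 - 2 * ‖v‖ * ‖v - T v‖ ≤ re ⟪v, T (S (T v))⟫_𝕜 := by
  set w := v - T v
  have hTv : T v = v - w := by simp [w]
  have expand : ⟪v, T (S (T v))⟫_𝕜 = ⟪v, S v⟫_𝕜 - ⟪S v, w⟫_𝕜 - ⟪w, S (T v)⟫_𝕜 := by
    rw [← hT.isSymmetric, hTv, map_sub, inner_sub_left, inner_sub_right, inner_sub_right,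
      hS.isSymmetric v w]
  have h₁ : re ⟪S v, w⟫_𝕜 ≤ ‖v‖ * ‖w‖ :=
    (re_inner_le_norm _ _).trans (by gcongr; exact hS.norm_map_le v)
  have h₂ : re ⟪w, S (T v)⟫_𝕜 ≤ ‖v‖ * ‖w‖ :=
    (re_inner_le_norm _ _).trans (by
      rw [mul_comm]; gcongr; exact (hS.norm_map_le _).trans (hT.norm_map_le v))
  rw [expand, map_sub, map_sub]
  linarith

end LinearMap.IsSymmetricProjection

namespace Matrix

variable {n : Type*} [Fintype n] [DecidableEq n]

theorem isSymmetricProjection_mulLeft {ρ : Matrix n n ℂ} (hρ : ρ.PosSemidef)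
    {P : Matrix n n ℂ} (hP : IsStarProjection P) :
    letI := ρ.toMatrixSeminormedAddCommGroup hρ
    letI := ρ.toMatrixInnerProductSpace hρ
    (LinearMap.mulLeft ℂ P).IsSymmetricProjection := by
  let := ρ.toMatrixSeminormedAddCommGroup hρ
  let := ρ.toMatrixInnerProductSpace hρ
  refine ⟨LinearMap.ext fun X => ?_, fun X Y => ?_⟩
  · simp [← mul_assoc, hP.isIdempotentElem.eq]
  · change (Y * ρ * (P * X)ᴴ).trace = ((P * Y) * ρ * Xᴴ).trace
    rw [conjTranspose_mul, show Pᴴ = P from hP.isSelfAdjoint, ← mul_assoc, trace_mul_comm]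
    simp only [mul_assoc]

theorem sub_two_mul_sqrt_le_re_trace_mul_mul_mul {ρ : Matrix n n ℂ} (hρ : ρ.PosSemidef)
    (hρ₁ : ρ.trace = 1) {Q R : Matrix n n ℂ} (hQ : IsStarProjection Q)
    (hR : IsStarProjection R) :
    (R * ρ).trace.re - 2 * √(1 - (Q * ρ).trace.re) ≤ (Q * R * Q * ρ).trace.re := by
  let := ρ.toMatrixSeminormedAddCommGroup hρ
  let := ρ.toMatrixInnerProductSpace hρ
  have hQ' := isSymmetricProjection_mulLeft hρ hQ
  have inner_one (X : Matrix n n ℂ) : ⟪1, X⟫_ℂ = (X * ρ).trace := by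
    change (X * ρ * 1ᴴ).trace = _
    simp
  have norm_one : ‖(1 : Matrix n n ℂ)‖ = 1 := by
    rw [norm_eq_sqrt_re_inner (𝕜 := ℂ), inner_one, one_mul, hρ₁]
    simp
  have norm_one_sub : ‖1 - Q * 1‖ = √(1 - (Q * ρ).trace.re) := by
    rw [← Real.sqrt_sq (norm_nonneg _)]
    have := hQ'.norm_sub_map_sq 1
    simp only [LinearMap.mulLeft_apply] at this
    rw [this, norm_one, inner_one]
    simp
  have h := hQ'.re_inner_map_sub_le (isSymmetricProjection_mulLeft hρ hR) 1
  simp only [LinearMap.mulLeft_apply, norm_one_sub, norm_one, inner_one] at h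
  simpa [mul_assoc] using h

end Matrix

theorem no_quantum_multiplexing_general (d : ℕ)
    (ρ : Bool → Bool → Matrix (Fin d) (Fin d) ℂ)
    (hρpsd : ∀ α β, (ρ α β).PosSemidef) (hρtr : ∀ α β, (ρ α β).trace = 1)
    (Pa Pb : Bool → Matrix (Fin d) (Fin d) ℂ)
    (hPaH : ∀ α, (Pa α).IsHermitian) (hPa2 : ∀ α, Pa α * Pa α = Pa α)
    (hPbH : ∀ β, (Pb β).IsHermitian) (hPb2 : ∀ β, Pb β * Pb β = Pb β)
    (ε : ℝ) (hε : ε ∈ Set.Icc (0 : ℝ) 1)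
    (ha : ∀ α β, 1 - ε ≤ (Matrix.trace (Pa α * ρ α β)).re)
    (hb : ∀ α β, 1 - ε ≤ (Matrix.trace (Pb β * ρ α β)).re) :
    ∀ α β, 1 - 2 * ε - 2 * Real.sqrt ε ≤
      (Matrix.trace (Pa α * Pb β * Pa α * ρ α β)).re := by
  intro α β
  have h := sub_two_mul_sqrt_le_re_trace_mul_mul_mul (hρpsd α β) (hρtr α β)
    ⟨hPa2 α, hPaH α⟩ ⟨hPb2 β, hPbH β⟩
  have hsqrt : √(1 - (Pa α * ρ α β).trace.re) ≤ √ε := Real.sqrt_le_sqrt (by linarith [ha α β])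
  linarith [hb α β, hε.1]

/-- Impossibility of quantum multiplexing of two classical bits: if states
`ρ_{α,β}` allow recovering either bit `α` (via the projective measurement
`{P^a_0, P^a_1}`) or bit `β` (via `{P^b_0, P^b_1}`) with probability at least
`1−ε`, then measuring the two measurements sequentially recovers both bits with
probability at least `1 − 2ε − 2√ε`. -/
theorem no_quantum_multiplexing (d : ℕ) (hd : 1 ≤ d)
    (ρ : Bool → Bool → Matrix (Fin d) (Fin d) ℂ)
    (hρpsd : ∀ α β, (ρ α β).PosSemidef) (hρtr : ∀ α β, (ρ α β).trace = 1)
    (Pa Pb : Bool → Matrix (Fin d) (Fin d) ℂ)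
    (hPaH : ∀ α, (Pa α).IsHermitian) (hPa2 : ∀ α, Pa α * Pa α = Pa α)
    (hPasum : Pa false + Pa true = 1)
    (hPbH : ∀ β, (Pb β).IsHermitian) (hPb2 : ∀ β, Pb β * Pb β = Pb β)
    (hPbsum : Pb false + Pb true = 1)
    (ε : ℝ) (hε : ε ∈ Set.Icc (0 : ℝ) 1)
    (ha : ∀ α β, 1 - ε ≤ (Matrix.trace (Pa α * ρ α β)).re)
    (hb : ∀ α β, 1 - ε ≤ (Matrix.trace (Pb β * ρ α β)).re) :
    ∀ α β, 1 - 2 * ε - 2 * Real.sqrt ε ≤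
      (Matrix.trace (Pa α * Pb β * Pa α * ρ α β)).re :=
  no_quantum_multiplexing_general d ρ hρpsd hρtr Pa Pb hPaH hPa2 hPbH hPb2 ε hε ha hb
end
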